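/- Under the (p,δ)-structure assumption on S with 1 < p ≤ 2, for every ε > 0 there exists c_ε > 0 depending only on ε and the characteristics of S such that for all u, v, w ∈ W^{1,p}(Ω)³: ∫_Ω (S(Du)−S(Dv))·(Dw−Dv) dx ≤ ε·‖F(Du)−F(Dv)‖²_{L²} + c_ε·‖F(Dw)−F(Dv)‖²_{L²}, where Du := (∇u+∇uᵀ)/2. -/

import Mathlib

open scoped BigOperators
open MeasureTheory

noncomputable def normF (P : Matrix (Fin 3) (Fin 3) ℝ) : ℝ :=
  Real.sqrt (∑ i, ∑ j, (P i j) ^ 2)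

noncomputable def symPart (P : Matrix (Fin 3) (Fin 3) ℝ) : Matrix (Fin 3) (Fin 3) ℝ :=
  (1 / 2 : ℝ) • (P + P.transpose)

noncomputable def mdot (A B : Matrix (Fin 3) (Fin 3) ℝ) : ℝ := ∑ i, ∑ j, A i j * B i j

noncomputable def FmapS (p δ : ℝ) (P : Matrix (Fin 3) (Fin 3) ℝ) :
    Matrix (Fin 3) (Fin 3) ℝ :=
  ((δ + normF (symPart P)) ^ ((p - 2) / 2)) • symPart P

/-- symmetric gradient `Du(x) = (∇u(x) + ∇u(x)ᵀ)/2` -/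
noncomputable def symGrad (u : (Fin 3 → ℝ) → (Fin 3 → ℝ)) (x : Fin 3 → ℝ) :
    Matrix (Fin 3) (Fin 3) ℝ :=
  fun i j => (1 / 2 : ℝ) *
    (fderiv ℝ u x (Pi.single j 1) i + fderiv ℝ u x (Pi.single i 1) j)

namespace Stmt7Aux

abbrev Mat := Matrix (Fin 3) (Fin 3) ℝ

lemma normF_nonneg (P : Mat) : 0 ≤ normF P := Real.sqrt_nonneg _

lemma sumsq_nonneg (P : Mat) : 0 ≤ ∑ i, ∑ j, (P i j)^2 := by positivity

lemma normF_sq (P : Mat) : (normF P)^2 = ∑ i, ∑ j, (P i j)^2 :=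
  Real.sq_sqrt (sumsq_nonneg P)

lemma abs_entry_le (P : Mat) (i j : Fin 3) : |P i j| ≤ normF P := by
  rw [normF, ← Real.sqrt_sq_eq_abs]
  apply Real.sqrt_le_sqrt
  have h1 : (P i j)^2 ≤ ∑ j', (P i j')^2 :=
    Finset.single_le_sum (f := fun j' => (P i j')^2) (fun _ _ => sq_nonneg _) (Finset.mem_univ j)
  exact h1.trans (Finset.single_le_sum (f := fun i' => ∑ j', (P i' j')^2)
    (fun _ _ => by positivity) (Finset.mem_univ i))

lemma normF_zero : normF (0 : Mat) = 0 := by simp [normF]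

lemma normF_eq_zero {P : Mat} (h : normF P = 0) : P = 0 := by
  have hs : ∑ i, ∑ j, (P i j)^2 = 0 := by
    have := normF_sq P; rw [h] at this; simpa using this.symm
  funext i j
  have h2 : ∀ i ∈ (Finset.univ : Finset (Fin 3)), (0:ℝ) ≤ ∑ j, (P i j)^2 :=
    fun _ _ => by positivity
  have h3 := (Finset.sum_eq_zero_iff_of_nonneg h2).1 hs i (Finset.mem_univ i)
  have h4 := (Finset.sum_eq_zero_iff_of_nonneg
    (fun j _ => sq_nonneg (P i j))).1 h3 j (Finset.mem_univ j)
  have := pow_eq_zero_iff (n := 2) (by norm_num) |>.1 h4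
  simpa using this

lemma normF_pos {P : Mat} (h : P ≠ 0) : 0 < normF P :=
  lt_of_le_of_ne (normF_nonneg P) (fun h' => h (normF_eq_zero h'.symm))

lemma normF_smul (r : ℝ) (P : Mat) : normF (r • P) = |r| * normF P := by
  simp only [normF, Matrix.smul_apply, smul_eq_mul, mul_pow]
  simp_rw [← Finset.mul_sum]
  rw [Real.sqrt_mul (sq_nonneg r), Real.sqrt_sq_eq_abs]

lemma normF_neg (P : Mat) : normF (-P) = normF P := by
  have := normF_smul (-1) P; simpa using this

lemma mdot_le (A B : Mat) : mdot A B ≤ normF A * normF B := by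
  have h := Finset.sum_mul_sq_le_sq_mul_sq Finset.univ
    (fun q : Fin 3 × Fin 3 => A q.1 q.2) (fun q => B q.1 q.2)
  have e1 : ∑ q : Fin 3 × Fin 3, A q.1 q.2 * B q.1 q.2 = mdot A B := by
    rw [mdot]; exact Fintype.sum_prod_type _
  have e2 : ∑ q : Fin 3 × Fin 3, (A q.1 q.2)^2 = (normF A)^2 := by
    rw [normF_sq]; exact Fintype.sum_prod_type _
  have e3 : ∑ q : Fin 3 × Fin 3, (B q.1 q.2)^2 = (normF B)^2 := by
    rw [normF_sq]; exact Fintype.sum_prod_type _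
  rw [e1, e2, e3] at h
  nlinarith [normF_nonneg A, normF_nonneg B, mul_nonneg (normF_nonneg A) (normF_nonneg B)]

lemma mdot_sub_left (A B C : Mat) : mdot (A - B) C = mdot A C - mdot B C := by
  simp only [mdot, Matrix.sub_apply, sub_mul, Finset.sum_sub_distrib]

lemma normF_add_le (A B : Mat) : normF (A + B) ≤ normF A + normF B := by
  have key : (normF (A + B))^2 ≤ (normF A + normF B)^2 := by
    rw [normF_sq]
    have e : ∑ i, ∑ j, ((A + B) i j)^2
        = (normF A)^2 + 2 * mdot A B + (normF B)^2 := by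
      rw [normF_sq, normF_sq, mdot]
      simp only [Matrix.add_apply, add_sq, Finset.sum_add_distrib, Finset.mul_sum, mul_assoc]
    rw [e]
    nlinarith [mdot_le A B]
  calc normF (A + B) = Real.sqrt ((normF (A+B))^2) := by
        rw [Real.sqrt_sq (normF_nonneg _)]
    _ ≤ Real.sqrt ((normF A + normF B)^2) := Real.sqrt_le_sqrt key
    _ = normF A + normF B := Real.sqrt_sq (add_nonneg (normF_nonneg A) (normF_nonneg B))

end Stmt7Aux

namespace Stmt7Aux

def IsSym (P : Mat) : Prop := ∀ i j, P i j = P j i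

lemma symPart_apply (P : Mat) (i j : Fin 3) : symPart P i j = (P i j + P j i)/2 := by
  simp [symPart, Matrix.add_apply, Matrix.transpose_apply, Matrix.smul_apply]
  ring

lemma IsSym.symPart_eq {P : Mat} (h : IsSym P) : symPart P = P := by
  funext i j
  rw [symPart_apply, h j i]
  ring

lemma abs_sub_le_of_mem_uIcc {m x y : ℝ} (h : m ∈ Set.uIcc x y) : |m - y| ≤ |x - y| := by
  rcases Set.mem_uIcc.1 h with ⟨h1, h2⟩ | ⟨h1, h2⟩
  · rw [abs_of_nonpos (by linarith), abs_of_nonpos (by linarith)]; linarith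
  · rw [abs_of_nonneg (by linarith), abs_of_nonneg (by linarith)]; linarith

lemma abs_sub_le_of_mem_uIcc' {m x y : ℝ} (h : m ∈ Set.uIcc x y) : |m - x| ≤ |x - y| := by
  rw [Set.uIcc_comm] at h
  have h2 := abs_sub_le_of_mem_uIcc h
  rwa [abs_sub_comm y x] at h2

lemma mvt_lower {g φ : ℝ → ℝ} {a b m : ℝ} (hab : a < b)
    (hc : ContinuousOn g (Set.Icc a b))
    (hd : ∀ t ∈ Set.Ioo a b, HasDerivAt g (φ t) t)
    (hm : ∀ t ∈ Set.Ioo a b, m ≤ φ t) : m * (b - a) ≤ g b - g a := by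
  obtain ⟨ξ, hξ, he⟩ := exists_hasDerivAt_eq_slope g φ hab hc hd
  have hba : (0:ℝ) < b - a := by linarith
  have h2 : g b - g a = φ ξ * (b - a) := by
    rw [he]; field_simp
  rw [h2]
  exact mul_le_mul_of_nonneg_right (hm ξ hξ) hba.le

lemma mvt_lower_excep {g φ : ℝ → ℝ} {m : ℝ} {E : Set ℝ} (hE : E.Subsingleton)
    (hc : ContinuousOn g (Set.Icc 0 1))
    (hd : ∀ t ∈ Set.Ioo (0:ℝ) 1, t ∉ E → HasDerivAt g (φ t) t)
    (hm : ∀ t ∈ Set.Ioo (0:ℝ) 1, t ∉ E → m ≤ φ t) : m ≤ g 1 - g 0 := by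
  by_cases hex : ∃ t₀ ∈ Set.Ioo (0:ℝ) 1, t₀ ∈ E
  · obtain ⟨t₀, ht₀, ht₀E⟩ := hex
    have hsub1 : Set.Ioo (0:ℝ) t₀ ⊆ Set.Ioo 0 1 := Set.Ioo_subset_Ioo le_rfl ht₀.2.le
    have hsub2 : Set.Ioo t₀ (1:ℝ) ⊆ Set.Ioo 0 1 := Set.Ioo_subset_Ioo ht₀.1.le le_rfl
    have hnot1 : ∀ t ∈ Set.Ioo (0:ℝ) t₀, t ∉ E := by
      intro t ht htE
      exact absurd (hE htE ht₀E) (ne_of_lt ht.2)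
    have hnot2 : ∀ t ∈ Set.Ioo t₀ (1:ℝ), t ∉ E := by
      intro t ht htE
      exact absurd (hE htE ht₀E) (ne_of_gt ht.1)
    have h1 : m * (t₀ - 0) ≤ g t₀ - g 0 :=
      mvt_lower ht₀.1 (hc.mono (Set.Icc_subset_Icc le_rfl ht₀.2.le))
        (fun t ht => hd t (hsub1 ht) (hnot1 t ht))
        (fun t ht => hm t (hsub1 ht) (hnot1 t ht))
    have h2 : m * (1 - t₀) ≤ g 1 - g t₀ :=
      mvt_lower ht₀.2 (hc.mono (Set.Icc_subset_Icc ht₀.1.le le_rfl))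
        (fun t ht => hd t (hsub2 ht) (hnot2 t ht))
        (fun t ht => hm t (hsub2 ht) (hnot2 t ht))
    nlinarith
  · push_neg at hex
    have h := mvt_lower (by norm_num : (0:ℝ) < 1) hc
      (fun t ht => hd t ht (hex t ht)) (fun t ht => hm t ht (hex t ht))
    simpa using h

section Main

variable {p δ : ℝ} {S : Mat → Mat} {DS : Mat → Fin 3 → Fin 3 → Fin 3 → Fin 3 → ℝ} {C₁ : ℝ}

lemma seg (hcont : ∀ i j, Continuous fun P => S P i j)
    (hderiv : ∀ P, symPart P ≠ 0 → ∀ i j k l,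
      HasDerivAt (fun t : ℝ => S (P + t • Matrix.single k l 1) i j)
        (DS P i j k l) 0)
    (hC₁ : 0 < C₁)
    (hgrowth : ∀ P : Mat, symPart P ≠ 0 → ∀ i j k l,
      |DS P i j k l| ≤ C₁ * (δ + normF (symPart P)) ^ (p - 2))
    (M : Mat) (k l i j : Fin 3) (c d G : ℝ)
    (hbox : ∀ t ∈ Set.uIcc c d,
      symPart (M + t • Matrix.single k l (1:ℝ)) ≠ 0 ∧
      (δ + normF (symPart (M + t • Matrix.single k l (1:ℝ)))) ^ (p-2) ≤ G) :
    |S (M + d • Matrix.single k l (1:ℝ)) i j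
      - S (M + c • Matrix.single k l (1:ℝ)) i j| ≤ C₁ * G * |d - c| := by
  -- reduce to the case c ≤ d
  have main : ∀ c d : ℝ, c ≤ d →
      (∀ t ∈ Set.uIcc c d,
        symPart (M + t • Matrix.single k l (1:ℝ)) ≠ 0 ∧
        (δ + normF (symPart (M + t • Matrix.single k l (1:ℝ)))) ^ (p-2) ≤ G) →
      |S (M + d • Matrix.single k l (1:ℝ)) i j
        - S (M + c • Matrix.single k l (1:ℝ)) i j| ≤ C₁ * G * |d - c| := by
    clear hbox c d
    intro c d hcd hbox
    rcases eq_or_lt_of_le hcd with rfl | hlt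
    · simp
    set E := Matrix.single k l (1:ℝ) with hE
    set g : ℝ → ℝ := fun t => S (M + t • E) i j with hg
    set φ : ℝ → ℝ := fun t => DS (M + t • E) i j k l with hφ
    have huIcc : Set.uIcc c d = Set.Icc c d := Set.uIcc_of_le hcd
    have hgc : ContinuousOn g (Set.Icc c d) := by
      apply Continuous.continuousOn
      exact (hcont i j).comp (continuous_const.add (continuous_id.smul continuous_const))
    have hgd : ∀ t ∈ Set.Ioo c d, HasDerivAt g (φ t) t := by
      intro t ht
      have htmem : t ∈ Set.uIcc c d := by
        rw [huIcc]; exact Set.Ioo_subset_Icc_self ht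
      have hne := (hbox t htmem).1
      have h0 := hderiv (M + t • E) hne i j k l
      have h0' : HasDerivAt (fun s : ℝ => S (M + t • E + s • E) i j)
          (DS (M + t • E) i j k l) (t - t) := by rw [sub_self]; exact h0
      have comp := h0'.comp_sub_const t t
      have hfun : (fun u : ℝ => S (M + t • E + (u - t) • E) i j) = g := by
        funext u
        have : M + t • E + (u - t) • E = M + u • E := by
          rw [add_assoc, ← add_smul, show t + (u - t) = u by ring]
        rw [this]
      rw [hfun] at comp
      exact comp
    obtain ⟨ξ, hξ, he⟩ := exists_hasDerivAt_eq_slope g φ hlt hgc hgd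
    have hξu : ξ ∈ Set.uIcc c d := by
      rw [huIcc]; exact Set.Ioo_subset_Icc_self hξ
    have heq : g d - g c = φ ξ * (d - c) := by
      rw [he, div_mul_cancel₀ _ (sub_ne_zero.2 hlt.ne')]
    have hb : |φ ξ| ≤ C₁ * G := by
      calc |φ ξ| ≤ C₁ * (δ + normF (symPart (M + ξ • E))) ^ (p-2) :=
            hgrowth (M + ξ • E) (hbox ξ hξu).1 i j k l
        _ ≤ C₁ * G := mul_le_mul_of_nonneg_left (hbox ξ hξu).2 hC₁.le
    calc |S (M + d • E) i j - S (M + c • E) i j| = |g d - g c| := rfl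
      _ = |φ ξ| * |d - c| := by rw [heq, abs_mul]
      _ ≤ (C₁ * G) * |d - c| := mul_le_mul_of_nonneg_right hb (abs_nonneg _)
  rcases le_total c d with h | h
  · exact main c d h hbox
  · have := main d c h (by rwa [Set.uIcc_comm])
    rw [abs_sub_comm] at this
    rw [abs_sub_comm d c]
    exact this

end Main

end Stmt7Aux
namespace Stmt7Aux
section Main
variable {p δ : ℝ} {S : Mat → Mat} {DS : Mat → Fin 3 → Fin 3 → Fin 3 → Fin 3 → ℝ} {C₁ : ℝ}

lemma box (hδ : 0 ≤ δ)
    (hcont : ∀ i j, Continuous fun P => S P i j)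
    (hderiv : ∀ P, symPart P ≠ 0 → ∀ i j k l,
      HasDerivAt (fun t : ℝ => S (P + t • Matrix.single k l 1) i j)
        (DS P i j k l) 0)
    (hC₁ : 0 < C₁)
    (hgrowth : ∀ P : Mat, symPart P ≠ 0 → ∀ i j k l,
      |DS P i j k l| ≤ C₁ * (δ + normF (symPart P)) ^ (p - 2))
    (X Y : Mat) (G : ℝ)
    (hbox : ∀ M : Mat, (∀ k l, M k l ∈ Set.uIcc (X k l) (Y k l)) →
      symPart M ≠ 0 ∧ (δ + normF (symPart M)) ^ (p-2) ≤ G) (i j : Fin 3) :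
    |S Y i j - S X i j| ≤ C₁ * G * ∑ k, ∑ l, |Y k l - X k l| := by
  classical
  set interp : Finset (Fin 3 × Fin 3) → Mat :=
    fun s => fun a b => if (a,b) ∈ s then Y a b else X a b with hinterp
  have hmem : ∀ (s : Finset (Fin 3 × Fin 3)) (a b : Fin 3),
      interp s a b ∈ Set.uIcc (X a b) (Y a b) := by
    intro s a b
    by_cases h : (a,b) ∈ s <;>
      simp [hinterp, h, Set.left_mem_uIcc, Set.right_mem_uIcc]
  have claim : ∀ s : Finset (Fin 3 × Fin 3),
      |S (interp s) i j - S X i j| ≤ C₁ * G * ∑ q ∈ s, |Y q.1 q.2 - X q.1 q.2| := by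
    intro s
    induction s using Finset.induction_on with
    | empty =>
      have hi : interp ∅ = X := by funext a b; simp [hinterp]
      simp [hi]
    | @insert q s hq IH =>
      set E := Matrix.single q.1 q.2 (1:ℝ) with hE
      set M : Mat := fun a b => if q.1 = a ∧ q.2 = b then 0 else interp s a b with hM
      have hMt : ∀ t : ℝ, (M + t • E)
          = fun a b => if q.1 = a ∧ q.2 = b then t else interp s a b := by
        intro t; funext a b
        show M a b + (t • E) a b = _
        simp only [Matrix.add_apply, Matrix.smul_apply, hE, Matrix.single_apply,
          Matrix.of_apply, smul_eq_mul, hM]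
        by_cases h : q.1 = a ∧ q.2 = b <;> simp [h]
      have hqq : ((q.1, q.2) : Fin 3 × Fin 3) = q := rfl
      have e1 : M + (X q.1 q.2) • E = interp s := by
        rw [hMt]; funext a b
        by_cases h : q.1 = a ∧ q.2 = b
        · obtain ⟨h1, h2⟩ := h; subst h1; subst h2
          have hns : ((q.1, q.2) : Fin 3 × Fin 3) ∉ s := by rw [hqq]; exact hq
          simp [hinterp, hns]
        · simp [if_neg h]
      have e2 : M + (Y q.1 q.2) • E = interp (insert q s) := by
        rw [hMt]; funext a b
        by_cases h : q.1 = a ∧ q.2 = b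
        · obtain ⟨h1, h2⟩ := h; subst h1; subst h2
          have : ((q.1, q.2) : Fin 3 × Fin 3) ∈ insert q s := by
            rw [hqq]; exact Finset.mem_insert_self q s
          simp [hinterp, this]
        · have hne : ((a, b) : Fin 3 × Fin 3) ≠ q := by
            intro hab
            exact h ⟨congrArg Prod.fst hab.symm, congrArg Prod.snd hab.symm⟩
          simp [if_neg h, hinterp, Finset.mem_insert, hne]
      have hseg : ∀ t ∈ Set.uIcc (X q.1 q.2) (Y q.1 q.2),
          symPart (M + t • E) ≠ 0 ∧
          (δ + normF (symPart (M + t • E))) ^ (p-2) ≤ G := by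
        intro t ht
        apply hbox
        intro a b
        rw [hMt t]
        by_cases h : q.1 = a ∧ q.2 = b
        · obtain ⟨h1, h2⟩ := h; subst h1; subst h2
          simpa using ht
        · simp only [if_neg h]
          exact hmem s a b
      have hstep := seg hcont hderiv hC₁ hgrowth M q.1 q.2 i j
        (X q.1 q.2) (Y q.1 q.2) G hseg
      rw [e1, e2] at hstep
      have htri : |S (interp (insert q s)) i j - S X i j| ≤
          |S (interp (insert q s)) i j - S (interp s) i j|
            + |S (interp s) i j - S X i j| := abs_sub_le _ _ _
      rw [Finset.sum_insert hq, mul_add]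
      calc |S (interp (insert q s)) i j - S X i j|
          ≤ |S (interp (insert q s)) i j - S (interp s) i j|
            + |S (interp s) i j - S X i j| := htri
        _ ≤ C₁ * G * |Y q.1 q.2 - X q.1 q.2|
            + C₁ * G * ∑ q ∈ s, |Y q.1 q.2 - X q.1 q.2| := by
            exact add_le_add hstep IH
      -- done
  have huniv : interp Finset.univ = Y := by funext a b; simp [hinterp]
  have h := claim Finset.univ
  rw [huniv] at h
  have hsum : ∑ q : Fin 3 × Fin 3, |Y q.1 q.2 - X q.1 q.2|
      = ∑ k, ∑ l, |Y k l - X k l| := Fintype.sum_prod_type _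
  rwa [hsum] at h

end Main
end Stmt7Aux
namespace Stmt7Aux

lemma normF_le_three {A : Mat} {m : ℝ} (h : ∀ i j, |A i j| ≤ m) : normF A ≤ 3 * m := by
  have hm : 0 ≤ m := (abs_nonneg _).trans (h 0 0)
  have hsum : ∑ i, ∑ j, (A i j)^2 ≤ ∑ _i : Fin 3, ∑ _j : Fin 3, m^2 := by
    refine Finset.sum_le_sum fun i _ => Finset.sum_le_sum fun j _ => ?_
    nlinarith [h i j, abs_nonneg (A i j), sq_abs (A i j)]
  calc normF A ≤ Real.sqrt (∑ _i : Fin 3, ∑ _j : Fin 3, m^2) := Real.sqrt_le_sqrt hsum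
    _ = Real.sqrt (9 * m^2) := by
        congr 1
        simp [Finset.sum_const]
        ring
    _ = 3 * m := by rw [show (9:ℝ)*m^2 = (3*m)^2 by ring, Real.sqrt_sq (by positivity)]

lemma sum_abs_le (A : Mat) : ∑ k, ∑ l, |A k l| ≤ 9 * normF A := by
  calc ∑ k, ∑ l, |A k l| ≤ ∑ _k : Fin 3, ∑ _l : Fin 3, normF A :=
      Finset.sum_le_sum fun k _ => Finset.sum_le_sum fun l _ => abs_entry_le A k l
    _ = 9 * normF A := by simp [Finset.sum_const]; ring

lemma IsSym.smul {P : Mat} (h : IsSym P) (c : ℝ) : IsSym (c • P) :=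
  fun i j => by simp [Matrix.smul_apply, h i j]

lemma normF_mono_entry {A B : Mat} (h : ∀ i j, |A i j| ≤ |B i j|) : normF A ≤ normF B := by
  apply Real.sqrt_le_sqrt
  refine Finset.sum_le_sum fun i _ => Finset.sum_le_sum fun j _ => ?_
  have := h i j
  nlinarith [abs_nonneg (A i j), sq_abs (A i j), sq_abs (B i j)]

lemma boxsym {X Y M : Mat} (hX : IsSym X) (hY : IsSym Y)
    (hm : ∀ a b, M a b ∈ Set.uIcc (X a b) (Y a b)) :
    normF (symPart M - Y) ≤ normF (X - Y) := by
  apply normF_mono_entry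
  intro a b
  rw [Matrix.sub_apply, symPart_apply, Matrix.sub_apply]
  have h1 : |M a b - Y a b| ≤ |X a b - Y a b| := abs_sub_le_of_mem_uIcc (hm a b)
  have h2 : |M b a - Y b a| ≤ |X b a - Y b a| := abs_sub_le_of_mem_uIcc (hm b a)
  rw [hX b a, hY b a] at h2
  have e : (M a b + M b a)/2 - Y a b = ((M a b - Y a b) + (M b a - Y a b))/2 := by ring
  have hY' : Y b a = Y a b := hY b a
  rw [e]
  calc |((M a b - Y a b) + (M b a - Y a b))/2|
      ≤ (|M a b - Y a b| + |M b a - Y a b|)/2 := by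
        rw [abs_div]
        simp only [abs_two]
        exact div_le_div_of_nonneg_right (abs_add_le _ _) (by norm_num) |>.trans le_rfl
    _ ≤ |X a b - Y a b| := by rw [← hY'] at h2 ⊢; rw [hY'] at h2 ⊢; linarith [h2]

section Main

variable {p δ : ℝ} {S : Mat → Mat} {DS : Mat → Fin 3 → Fin 3 → Fin 3 → Fin 3 → ℝ} {C₁ : ℝ}

lemma term_le (hp : 1 < p) (hp2 : p ≤ 2) (hδ : 0 ≤ δ) {R s : ℝ}
    (hR : 0 < R) (hs : 0 < s) (hs1 : s ≤ 1) :
    (δ + s * R) ^ (p-2) * (s * R) ≤ s ^ (p-1) * ((δ + R) ^ (p-2) * R) := by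
  have hδr : 0 < δ + s * R := by nlinarith
  have hδR : 0 < δ + R := by nlinarith
  have h1 : s * (δ + R) ≤ δ + s * R := by nlinarith
  have h2 : (δ + s * R) ^ (p-2) ≤ (s * (δ + R)) ^ (p-2) :=
    Real.rpow_le_rpow_of_nonpos (by nlinarith) h1 (by linarith)
  have h3 : (s * (δ + R)) ^ (p-2) = s ^ (p-2) * (δ + R) ^ (p-2) :=
    Real.mul_rpow hs.le hδR.le
  calc (δ + s * R) ^ (p-2) * (s * R)
      ≤ (s ^ (p-2) * (δ + R) ^ (p-2)) * (s * R) := by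
        apply mul_le_mul_of_nonneg_right (h2.trans_eq h3) (by positivity)
    _ = (s ^ (p-2) * s) * ((δ + R) ^ (p-2) * R) := by ring
    _ = s ^ (p-1) * ((δ + R) ^ (p-2) * R) := by
        rw [show p - 1 = (p - 2) + 1 by ring, Real.rpow_add_one hs.ne']

lemma pow_rpow_comm (n : ℕ) {e : ℝ} :
    (((1/2:ℝ))^n) ^ e = (((1/2:ℝ)) ^ e) ^ n := by
  rw [← Real.rpow_natCast (1/2 : ℝ) n, ← Real.rpow_mul (by norm_num), mul_comm,
    Real.rpow_mul (by norm_num), Real.rpow_natCast]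

lemma sbound (hp : 1 < p) (hp2 : p ≤ 2) (hδ : 0 ≤ δ)
    (hcont : ∀ i j, Continuous fun P => S P i j)
    (hzero : S 0 = 0)
    (hderiv : ∀ P, symPart P ≠ 0 → ∀ i j k l,
      HasDerivAt (fun t : ℝ => S (P + t • Matrix.single k l 1) i j)
        (DS P i j k l) 0)
    (hC₁ : 0 < C₁)
    (hgrowth : ∀ P : Mat, symPart P ≠ 0 → ∀ i j k l,
      |DS P i j k l| ≤ C₁ * (δ + normF (symPart P)) ^ (p - 2))
    (P : Mat) (hP : IsSym P) :
    normF (S P) ≤ (27 * C₁ / (1 - (1/2:ℝ) ^ (p-1))) * ((δ + normF P) ^ (p-2) * normF P) := by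
  set Q : ℝ := (1/2:ℝ) ^ (p-1) with hQdef
  have hQ0 : 0 < Q := Real.rpow_pos_of_pos (by norm_num) _
  have hQ1 : Q < 1 := Real.rpow_lt_one (by norm_num) (by norm_num) (by linarith)
  rcases eq_or_ne P 0 with rfl | hPne
  · simp [hzero, normF_zero]
  have hPpos : 0 < normF P := normF_pos hPne
  set X0 : ℝ := (δ + normF P) ^ (p-2) * normF P with hX0
  have hX0pos : 0 < X0 := mul_pos (Real.rpow_pos_of_pos (by nlinarith) _) hPpos
  have entry : ∀ i j, |S P i j| ≤ (9 * C₁ / (1 - Q)) * X0 := by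
    intro i j
    set a : ℕ → ℝ := fun n => S (((1/2:ℝ)^n) • P) i j with ha
    have step : ∀ n : ℕ, |a n - a (n+1)| ≤ (9 * C₁ * Q^(n+1)) * X0 := by
      intro n
      set X : Mat := ((1/2:ℝ)^(n+1)) • P with hXdef
      set Y : Mat := ((1/2:ℝ)^n) • P with hYdef
      have hXsym : IsSym X := hP.smul _
      have hYsym : IsSym Y := hP.smul _
      have hXY : X - Y = (-((1/2:ℝ)^(n+1))) • P := by
        rw [hXdef, hYdef, ← sub_smul]
        congr 1
        rw [pow_succ]; ring
      have hnXY : normF (X - Y) = (1/2:ℝ)^(n+1) * normF P := by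
        rw [hXY, normF_smul, abs_neg, abs_of_pos (by positivity)]
      set r : ℝ := (1/2:ℝ)^(n+1) * normF P with hrdef
      have hrpos : 0 < r := by positivity
      set G : ℝ := (δ + r) ^ (p-2) with hGdef
      have hbox : ∀ M : Mat, (∀ k l, M k l ∈ Set.uIcc (X k l) (Y k l)) →
          symPart M ≠ 0 ∧ (δ + normF (symPart M)) ^ (p-2) ≤ G := by
        intro M hm
        have hclose : normF (symPart M - Y) ≤ r := by
          rw [← hnXY]; exact boxsym hXsym hYsym hm
        have hYn : normF Y = (1/2:ℝ)^n * normF P := by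
          rw [hYdef, normF_smul, abs_of_pos (by positivity)]
        have hlow : r ≤ normF (symPart M) := by
          have htri : normF Y ≤ normF (symPart M) + normF (symPart M - Y) := by
            have : Y = symPart M + -(symPart M - Y) := by abel
            calc normF Y = normF (symPart M + -(symPart M - Y)) := by rw [← this]
              _ ≤ normF (symPart M) + normF (-(symPart M - Y)) := normF_add_le _ _
              _ = normF (symPart M) + normF (symPart M - Y) := by rw [normF_neg]
          have h2r : normF Y = 2 * r := by
            rw [hYn, hrdef, pow_succ]; ring
          linarith
        constructor
        · intro hz
          rw [hz, normF_zero] at hlow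
          exact absurd hlow (not_le.2 hrpos)
        · exact Real.rpow_le_rpow_of_nonpos (by nlinarith) (by linarith) (by linarith)
      have hb := box hδ hcont hderiv hC₁ hgrowth X Y G hbox i j
      have hsum : ∑ k, ∑ l, |Y k l - X k l| ≤ 9 * r := by
        have : ∀ k l : Fin 3, Y k l - X k l = (Y - X) k l := by
          intro k l; rw [Matrix.sub_apply]
        calc ∑ k, ∑ l, |Y k l - X k l| = ∑ k, ∑ l, |(Y - X) k l| := by
              refine Finset.sum_congr rfl fun k _ => Finset.sum_congr rfl fun l _ => ?_
              rw [this k l]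
          _ ≤ 9 * normF (Y - X) := sum_abs_le _
          _ = 9 * r := by
              rw [show Y - X = -(X - Y) by abel, normF_neg, hnXY]
      have hCG : 0 ≤ C₁ * G := by positivity
      have key : |a n - a (n+1)| ≤ C₁ * G * (9 * r) := by
        have : |a n - a (n+1)| = |S Y i j - S X i j| := by rw [ha]
        rw [this]
        exact hb.trans (mul_le_mul_of_nonneg_left hsum hCG)
      refine key.trans ?_
      have hterm : G * r ≤ Q^(n+1) * X0 := by
        have := term_le hp hp2 hδ hPpos (s := (1/2:ℝ)^(n+1)) (by positivity)
          (by apply pow_le_one₀ <;> norm_num)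
        rw [hGdef, hrdef, hX0]
        calc (δ + (1/2:ℝ)^(n+1) * normF P) ^ (p-2) * ((1/2:ℝ)^(n+1) * normF P)
            ≤ ((1/2:ℝ)^(n+1)) ^ (p-1) * ((δ + normF P) ^ (p-2) * normF P) := this
          _ = Q^(n+1) * ((δ + normF P) ^ (p-2) * normF P) := by
              rw [pow_rpow_comm]
      calc C₁ * G * (9 * r) = 9 * C₁ * (G * r) := by ring
        _ ≤ 9 * C₁ * (Q^(n+1) * X0) := by
            apply mul_le_mul_of_nonneg_left hterm (by positivity)
        _ = (9 * C₁ * Q^(n+1)) * X0 := by ring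
    have tel : ∀ n : ℕ, |a 0| ≤ |a n| + ∑ m ∈ Finset.range n, |a m - a (m+1)| := by
      intro n
      induction n with
      | zero => simp
      | succ n ih =>
        rw [Finset.sum_range_succ]
        have h3 : |a n| ≤ |a (n+1)| + |a n - a (n+1)| := by
          calc |a n| = |a (n+1) + (a n - a (n+1))| := by ring_nf
            _ ≤ |a (n+1)| + |a n - a (n+1)| := abs_add_le _ _
        linarith
    have bnd : ∀ n : ℕ, |a 0| ≤ |a n| + (9 * C₁ / (1 - Q)) * X0 := by
      intro n
      have hsum2 : ∑ m ∈ Finset.range n, |a m - a (m+1)|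
          ≤ (9 * C₁ * X0) * ∑ m ∈ Finset.range n, Q^(m+1) := by
        rw [Finset.mul_sum]
        refine Finset.sum_le_sum fun m _ => ?_
        calc |a m - a (m+1)| ≤ (9 * C₁ * Q^(m+1)) * X0 := step m
          _ = 9 * C₁ * X0 * Q^(m+1) := by ring
      have hgeom : ∑ m ∈ Finset.range n, Q^(m+1) ≤ 1 / (1 - Q) := by
        have h1 : ∑ m ∈ Finset.range n, Q^(m+1) ≤ ∑ m ∈ Finset.range n, Q^m :=
          Finset.sum_le_sum fun m _ => by
            apply pow_le_pow_of_le_one hQ0.le hQ1.le; omega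
        have h2 : ∑ m ∈ Finset.range n, Q^m = (1 - Q^n) / (1 - Q) := by
          rw [geom_sum_eq hQ1.ne]
          rw [div_eq_div_iff (by linarith) (by linarith)]
          ring
        have h3 : (1 - Q^n) / (1 - Q) ≤ 1 / (1 - Q) := by
          apply (div_le_div_iff_of_pos_right (by linarith)).2
          nlinarith [pow_nonneg hQ0.le n]
        calc ∑ m ∈ Finset.range n, Q^(m+1) ≤ ∑ m ∈ Finset.range n, Q^m := h1
          _ = (1 - Q^n)/(1 - Q) := h2
          _ ≤ 1/(1 - Q) := h3
      calc |a 0| ≤ |a n| + ∑ m ∈ Finset.range n, |a m - a (m+1)| := tel n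
        _ ≤ |a n| + (9 * C₁ * X0) * (1 / (1 - Q)) := by
            have := hsum2.trans (mul_le_mul_of_nonneg_left hgeom (by positivity))
            linarith
        _ = |a n| + (9 * C₁ / (1 - Q)) * X0 := by ring
    have hlim : Filter.Tendsto (fun n : ℕ => |a n|) Filter.atTop (nhds 0) := by
      have h0 : Filter.Tendsto (fun n : ℕ => ((1/2:ℝ)^n)) Filter.atTop (nhds 0) := by
        apply tendsto_pow_atTop_nhds_zero_of_lt_one (by norm_num) (by norm_num)
      have h1 : Filter.Tendsto (fun n : ℕ => ((1/2:ℝ)^n) • P) Filter.atTop (nhds 0) := by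
        have := h0.smul_const P
        simpa using this
      have h2 := ((hcont i j).tendsto 0).comp h1
      rw [hzero] at h2
      simp only [Matrix.zero_apply] at h2
      rw [ha]
      simpa using h2.abs
    have hfin : |a 0| ≤ 0 + (9 * C₁ / (1 - Q)) * X0 := by
      apply ge_of_tendsto (hlim.add_const ((9 * C₁ / (1 - Q)) * X0))
      exact Filter.Eventually.of_forall bnd
    have ha0 : a 0 = S P i j := by rw [ha]; norm_num
    rw [ha0] at hfin
    linarith
  have := normF_le_three entry
  calc normF (S P) ≤ 3 * ((9 * C₁ / (1 - Q)) * X0) := this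
    _ = (27 * C₁ / (1 - Q)) * X0 := by ring

end Main
end Stmt7Aux
namespace Stmt7Aux

lemma normF_sub_le (U V : Mat) : normF (U - V) ≤ normF U + normF V := by
  calc normF (U - V) = normF (U + -V) := by rw [sub_eq_add_neg]
    _ ≤ normF U + normF (-V) := normF_add_le _ _
    _ = normF U + normF V := by rw [normF_neg]

section Main

variable {p δ : ℝ} {S : Mat → Mat} {DS : Mat → Fin 3 → Fin 3 → Fin 3 → Fin 3 → ℝ} {C₁ : ℝ}

lemma monoT (hp : 1 < p) (hp2 : p ≤ 2) (hδ : 0 ≤ δ) {s t : ℝ} (hs : 0 ≤ s) (hst : s ≤ t) :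
    (δ + s)^(p-2) * s ≤ (δ + t)^(p-2) * t := by
  rcases eq_or_lt_of_le hs with rfl | hs0
  · simp only [mul_zero]
    have ht : 0 ≤ t := hst
    positivity
  rcases eq_or_lt_of_le hst with rfl | hlt
  · exact le_rfl
  have ht : 0 < t := hs0.trans hlt
  have hq0 : 0 < s / t := div_pos hs0 ht
  have h1 : (s/t) * (δ + t) ≤ δ + s := by
    rw [div_mul_eq_mul_div, div_le_iff₀ ht]
    nlinarith
  have h2 : (δ + s)^(p-2) ≤ ((s/t) * (δ + t))^(p-2) :=
    Real.rpow_le_rpow_of_nonpos (by positivity) h1 (by linarith)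
  have h3 : ((s/t) * (δ + t))^(p-2) = (s/t)^(p-2) * (δ + t)^(p-2) :=
    Real.mul_rpow hq0.le (by positivity)
  calc (δ + s)^(p-2) * s ≤ ((s/t)^(p-2) * (δ + t)^(p-2)) * s :=
        mul_le_mul_of_nonneg_right (h2.trans_eq h3) hs
    _ = ((δ + t)^(p-2) * t) * ((s/t)^(p-2) * (s/t)) := by
        field_simp
    _ = ((δ + t)^(p-2) * t) * (s/t)^(p-1) := by
        rw [show p - 1 = (p-2) + 1 by ring, Real.rpow_add_one hq0.ne']
    _ ≤ ((δ + t)^(p-2) * t) * 1 := by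
        apply mul_le_mul_of_nonneg_left
          (Real.rpow_le_one hq0.le ((div_le_one ht).2 hst) (by linarith))
        positivity
    _ = (δ + t)^(p-2) * t := mul_one _

lemma H1 (hp : 1 < p) (hp2 : p ≤ 2) (hδ : 0 ≤ δ)
    (hcont : ∀ i j, Continuous fun P => S P i j)
    (hzero : S 0 = 0)
    (hderiv : ∀ P, symPart P ≠ 0 → ∀ i j k l,
      HasDerivAt (fun t : ℝ => S (P + t • Matrix.single k l 1) i j)
        (DS P i j k l) 0)
    (hC₁ : 0 < C₁)
    (hgrowth : ∀ P : Mat, symPart P ≠ 0 → ∀ i j k l,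
      |DS P i j k l| ≤ C₁ * (δ + normF (symPart P)) ^ (p - 2))
    (A B : Mat) (hA : IsSym A) (hB : IsSym B) :
    normF (S A - S B) ≤ (432*C₁ + 8*(27*C₁/(1-(1/2:ℝ)^(p-1))))
      * ((δ + normF A + normF B)^(p-2) * normF (A - B)) := by
  have hQ1 : (1/2:ℝ)^(p-1) < 1 := Real.rpow_lt_one (by norm_num) (by norm_num) (by linarith)
  have hQ0 : (0:ℝ) < (1/2:ℝ)^(p-1) := Real.rpow_pos_of_pos (by norm_num) _
  set K₂ : ℝ := 27*C₁/(1-(1/2:ℝ)^(p-1)) with hK2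
  have hK2pos : 0 < K₂ := div_pos (by linarith) (by linarith)
  set K₁ : ℝ := 432*C₁ + 8*K₂ with hK1
  have hK1pos : 0 < K₁ := by positivity
  rcases eq_or_ne A B with rfl | hAB
  · simp [sub_self, normF_zero]
  set D : ℝ := δ + normF A + normF B with hD
  have hABpos : 0 < normF (A - B) := normF_pos (sub_ne_zero.2 hAB)
  have hsumAB : 0 < normF A + normF B := by
    by_contra h
    push_neg at h
    have h1 : normF A = 0 := le_antisymm (by linarith [normF_nonneg B]) (normF_nonneg A)
    have h2 : normF B = 0 := le_antisymm (by linarith [normF_nonneg A]) (normF_nonneg B)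
    exact hAB (by rw [normF_eq_zero h1, normF_eq_zero h2])
  have hDpos : 0 < D := by rw [hD]; linarith
  have hDnn : 0 ≤ D^(p-2) * normF (A - B) := by positivity
  by_cases hcase : normF (A - B) * 4 ≤ normF A + normF B
  · -- near case : Lipschitz estimate along the box
    set G : ℝ := (D/4)^(p-2) with hG
    have hbox : ∀ M : Mat, (∀ k l, M k l ∈ Set.uIcc (B k l) (A k l)) →
        symPart M ≠ 0 ∧ (δ + normF (symPart M))^(p-2) ≤ G := by
      intro M hm
      have hclA : normF (symPart M - A) ≤ normF (A - B) := by
        have := boxsym hB hA hm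
        calc normF (symPart M - A) ≤ normF (B - A) := this
          _ = normF (A - B) := by rw [show B - A = -(A-B) by abel, normF_neg]
      have hlowA : normF A - normF (A - B) ≤ normF (symPart M) := by
        have htri : normF A ≤ normF (symPart M) + normF (symPart M - A) := by
          calc normF A = normF (symPart M + -(symPart M - A)) := by
                congr 1; abel
            _ ≤ normF (symPart M) + normF (-(symPart M - A)) := normF_add_le _ _
            _ = normF (symPart M) + normF (symPart M - A) := by rw [normF_neg]
        linarith
      have hclB : normF (symPart M - B) ≤ normF (A - B) := by
        have hm' : ∀ a b, M a b ∈ Set.uIcc (A a b) (B a b) := by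
          intro a b; rw [Set.uIcc_comm]; exact hm a b
        exact boxsym hA hB hm'
      have hlowB : normF B - normF (A - B) ≤ normF (symPart M) := by
        have htri : normF B ≤ normF (symPart M) + normF (symPart M - B) := by
          calc normF B = normF (symPart M + -(symPart M - B)) := by
                congr 1; abel
            _ ≤ normF (symPart M) + normF (-(symPart M - B)) := normF_add_le _ _
            _ = normF (symPart M) + normF (symPart M - B) := by rw [normF_neg]
        linarith
      have hlow : (normF A + normF B)/4 ≤ normF (symPart M) := by
        have := normF_nonneg (symPart M)
        nlinarith
      constructor
      · intro hz
        rw [hz, normF_zero] at hlow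
        linarith
      · apply Real.rpow_le_rpow_of_nonpos (by positivity) ?_ (by linarith)
        rw [hD]
        linarith
    have hb : ∀ i j, |(S A - S B) i j| ≤ C₁ * G * (9 * normF (A - B)) := by
      intro i j
      rw [Matrix.sub_apply]
      have h := box hδ hcont hderiv hC₁ hgrowth B A G hbox i j
      refine h.trans ?_
      apply mul_le_mul_of_nonneg_left ?_ (by positivity)
      calc ∑ k, ∑ l, |A k l - B k l| = ∑ k, ∑ l, |(A - B) k l| := by
            refine Finset.sum_congr rfl fun k _ => Finset.sum_congr rfl fun l _ => ?_
            rw [Matrix.sub_apply]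
        _ ≤ 9 * normF (A - B) := sum_abs_le _
    have hGle : G ≤ 4 * D^(p-2) := by
      rw [hG]
      have e1 : (D/4) = D * (1/4 : ℝ) := by ring
      rw [e1, Real.mul_rpow hDpos.le (by norm_num)]
      have e2 : ((1:ℝ)/4)^(p-2) = (4:ℝ)^(2-p) := by
        rw [show (1:ℝ)/4 = (4:ℝ)⁻¹ by norm_num, Real.inv_rpow (by norm_num),
          ← Real.rpow_neg (by norm_num), show -(p-2) = 2-p by ring]
      rw [e2]
      have e3 : (4:ℝ)^(2-p) ≤ 4 := by
        calc (4:ℝ)^(2-p) ≤ (4:ℝ)^(1:ℝ) :=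
              Real.rpow_le_rpow_of_exponent_le (by norm_num) (by linarith)
          _ = 4 := Real.rpow_one 4
      calc D^(p-2) * (4:ℝ)^(2-p) ≤ D^(p-2) * 4 :=
            mul_le_mul_of_nonneg_left e3 (by positivity)
        _ = 4 * D^(p-2) := by ring
    calc normF (S A - S B) ≤ 3 * (C₁ * G * (9 * normF (A - B))) := normF_le_three hb
      _ = 27 * C₁ * normF (A - B) * G := by ring
      _ ≤ 27 * C₁ * normF (A - B) * (4 * D^(p-2)) := by
          apply mul_le_mul_of_nonneg_left hGle (by positivity)
      _ = 108 * C₁ * (D^(p-2) * normF (A - B)) := by ring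
      _ ≤ K₁ * (D^(p-2) * normF (A - B)) := by
          apply mul_le_mul_of_nonneg_right ?_ hDnn
          rw [hK1]; linarith
  · -- far case : use the bound on S itself
    push_neg at hcase
    have hSA := sbound hp hp2 hδ hcont hzero hderiv hC₁ hgrowth A hA
    have hSB := sbound hp hp2 hδ hcont hzero hderiv hC₁ hgrowth B hB
    have hmA : (δ + normF A)^(p-2) * normF A ≤ D^(p-2) * (normF A + normF B) := by
      have := monoT hp hp2 hδ (normF_nonneg A) (by linarith [normF_nonneg B] :
        normF A ≤ normF A + normF B)
      rw [hD]; convert this using 3 <;> ring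
    have hmB : (δ + normF B)^(p-2) * normF B ≤ D^(p-2) * (normF A + normF B) := by
      have := monoT hp hp2 hδ (normF_nonneg B) (by linarith [normF_nonneg A] :
        normF B ≤ normF A + normF B)
      rw [hD]; convert this using 3 <;> ring
    have hDp : 0 ≤ D^(p-2) := by positivity
    calc normF (S A - S B) ≤ normF (S A) + normF (S B) := normF_sub_le _ _
      _ ≤ K₂ * ((δ + normF A)^(p-2) * normF A) + K₂ * ((δ + normF B)^(p-2) * normF B) := by
          rw [hK2]; exact add_le_add hSA hSB
      _ ≤ K₂ * (D^(p-2) * (normF A + normF B)) + K₂ * (D^(p-2) * (normF A + normF B)) :=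
          add_le_add (mul_le_mul_of_nonneg_left hmA hK2pos.le)
            (mul_le_mul_of_nonneg_left hmB hK2pos.le)
      _ = 2 * K₂ * D^(p-2) * (normF A + normF B) := by ring
      _ ≤ 2 * K₂ * D^(p-2) * (normF (A - B) * 4) := by
          apply mul_le_mul_of_nonneg_left hcase.le (by positivity)
      _ = 8 * K₂ * (D^(p-2) * normF (A - B)) := by ring
      _ ≤ K₁ * (D^(p-2) * normF (A - B)) := by
          apply mul_le_mul_of_nonneg_right ?_ hDnn
          rw [hK1]; linarith

end Main
end Stmt7Aux
namespace Stmt7Aux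

lemma mdot_smul_left (c : ℝ) (A B : Mat) : mdot (c • A) B = c * mdot A B := by
  simp only [mdot, Matrix.smul_apply, smul_eq_mul, Finset.mul_sum, mul_assoc]

lemma mdot_neg_left (A B : Mat) : mdot (-A) B = - mdot A B := by
  simp only [mdot, Matrix.neg_apply, neg_mul, Finset.sum_neg_distrib]

lemma abs_mdot_le (A B : Mat) : |mdot A B| ≤ normF A * normF B := by
  rw [abs_le]
  constructor
  · have h := mdot_le (-A) B
    rw [mdot_neg_left, normF_neg] at h
    linarith
  · exact mdot_le A B

lemma IsSym.add {P Q : Mat} (hP : IsSym P) (hQ : IsSym Q) : IsSym (P + Q) :=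
  fun i j => by simp [Matrix.add_apply, hP i j, hQ i j]

lemma IsSym.sub {P Q : Mat} (hP : IsSym P) (hQ : IsSym Q) : IsSym (P - Q) :=
  fun i j => by simp [Matrix.sub_apply, hP i j, hQ i j]

set_option maxHeartbeats 1000000 in
lemma flow {p δ : ℝ} (hp : 1 < p) (hp2 : p ≤ 2) (hδ : 0 ≤ δ)
    (X Y : Mat) (hX : IsSym X) (hY : IsSym Y) :
    (p/2) * (δ + normF X + normF Y)^((p-2)/2) * normF (X - Y)
      ≤ normF (FmapS p δ X - FmapS p δ Y) := by
  set α : ℝ := (p-2)/2 with hα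
  have hα0 : α ≤ 0 := by rw [hα]; linarith
  have hα1 : 0 < 1 + α := by rw [hα]; linarith
  rcases eq_or_ne X Y with rfl | hXY
  · simp [sub_self, normF_zero]
  set H : Mat := X - Y with hH
  have hHne : H ≠ 0 := sub_ne_zero.2 hXY
  have hHpos : 0 < normF H := normF_pos hHne
  set D0 : ℝ := δ + normF X + normF Y with hD0
  have hD0pos : 0 < D0 := by
    rw [hD0]
    rcases eq_or_ne X 0 with rfl | hX0
    · have : Y ≠ 0 := fun h => hXY (by rw [h])
      have := normF_pos this
      have := normF_nonneg (0 : Mat)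
      linarith
    · have := normF_pos hX0
      have := normF_nonneg Y
      linarith
  set nf : ℝ → ℝ := fun t => ∑ i, ∑ j, (Y i j + t * H i j)^2 with hnf
  set wf : ℝ → ℝ := fun t => ∑ i, ∑ j, (Y i j + t * H i j) * H i j with hwf
  set g : ℝ → ℝ := fun t => (δ + Real.sqrt (nf t))^α * wf t with hg
  have hZapp : ∀ (t : ℝ) (i j : Fin 3), (Y + t • H) i j = Y i j + t * H i j := by
    intro t i j; simp [Matrix.add_apply, Matrix.smul_apply, smul_eq_mul]
  have hZsym : ∀ t : ℝ, IsSym (Y + t • H) := by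
    intro t i j
    rw [hZapp, hZapp, hY i j, hH, Matrix.sub_apply, Matrix.sub_apply, hX i j, hY i j]
  have hnZ : ∀ t, nf t = (normF (Y + t • H))^2 := by
    intro t
    rw [normF_sq, hnf]
    exact Finset.sum_congr rfl fun i _ => Finset.sum_congr rfl fun j _ => by rw [hZapp]
  have hrZ : ∀ t, Real.sqrt (nf t) = normF (Y + t • H) := by
    intro t; rw [hnZ, Real.sqrt_sq (normF_nonneg _)]
  have hwZ : ∀ t, wf t = mdot (Y + t • H) H := by
    intro t
    rw [hwf, mdot]
    exact Finset.sum_congr rfl fun i _ => Finset.sum_congr rfl fun j _ => by rw [hZapp]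
  have hgF : ∀ t, g t = mdot (FmapS p δ (Y + t • H)) H := by
    intro t
    rw [hg]
    show (δ + Real.sqrt (nf t))^α * wf t = _
    rw [FmapS, (hZsym t).symPart_eq, mdot_smul_left, hrZ, hwZ, hα]
  have hZ1 : Y + (1:ℝ) • H = X := by rw [one_smul, hH]; abel
  have hZ0 : Y + (0:ℝ) • H = Y := by rw [zero_smul, add_zero]
  have hnfq : ∀ t, 0 ≤ nf t := by intro t; rw [hnZ]; positivity
  have hHH : (∑ i, ∑ j, H i j * H i j) = (normF H)^2 := by
    rw [normF_sq]
    exact Finset.sum_congr rfl fun i _ => Finset.sum_congr rfl fun j _ => (pow_two _).symm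
  -- the candidate derivative
  set φ : ℝ → ℝ := fun t =>
    (α * (δ + Real.sqrt (nf t))^(α-1) *
      ((∑ i, ∑ j, 2 * (Y i j + t * H i j) * H i j) / (2 * Real.sqrt (nf t)))) * wf t
    + (δ + Real.sqrt (nf t))^α * (∑ i, ∑ j, H i j * H i j) with hφ
  set E : Set ℝ := {t | Y + t • H = 0} with hEdef
  have hEsub : E.Subsingleton := by
    intro t1 ht1 t2 ht2
    have h1 : Y + t1 • H = 0 := ht1
    have h2 : Y + t2 • H = 0 := ht2
    have h3 : (t1 - t2) • H = 0 := by
      rw [sub_smul]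
      calc t1 • H - t2 • H = (Y + t1 • H) - (Y + t2 • H) := by abel
        _ = 0 := by rw [h1, h2, sub_self]
    rcases smul_eq_zero.1 h3 with h | h
    · exact sub_eq_zero.1 h
    · exact absurd h hHne
  -- derivative of nf and wf (everywhere)
  have hbase : ∀ (t : ℝ) (i j : Fin 3),
      HasDerivAt (fun t : ℝ => Y i j + t * H i j) (H i j) t := by
    intro t i j
    simpa using (hasDerivAt_mul_const (H i j)).const_add (Y i j)
  have hnd : ∀ t : ℝ, HasDerivAt nf (∑ i, ∑ j, 2 * (Y i j + t * H i j) * H i j) t := by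
    intro t
    rw [hnf]
    apply HasDerivAt.fun_sum
    intro i _
    apply HasDerivAt.fun_sum
    intro j _
    have := (hbase t i j).fun_pow 2
    simpa using this
  have hwd : ∀ t : ℝ, HasDerivAt wf (∑ i, ∑ j, H i j * H i j) t := by
    intro t
    rw [hwf]
    apply HasDerivAt.fun_sum
    intro i _
    apply HasDerivAt.fun_sum
    intro j _
    exact (hbase t i j).mul_const (H i j)
  -- derivative of g off E
  have hgd : ∀ t : ℝ, t ∉ E → HasDerivAt g (φ t) t := by
    intro t htE
    have hZne : Y + t • H ≠ 0 := htE
    have hrpos : 0 < Real.sqrt (nf t) := by rw [hrZ]; exact normF_pos hZne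
    have hnne : nf t ≠ 0 := by
      intro h
      rw [h, Real.sqrt_zero] at hrpos
      exact lt_irrefl 0 hrpos
    have hrd := (hnd t).sqrt hnne
    have hδr : δ + Real.sqrt (nf t) ≠ 0 := by positivity
    have hρ := HasDerivAt.rpow_const (p := α) (hrd.const_add δ) (Or.inl hδr)
    have := hρ.fun_mul (hwd t)
    rw [hφ]
    refine this.congr_deriv ?_
    ring
  -- lower bound on φ off E, within [0,1]
  set m : ℝ := (p/2) * D0^α * (normF H)^2 with hm
  have hφlow : ∀ t ∈ Set.Ioo (0:ℝ) 1, t ∉ E → m ≤ φ t := by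
    intro t ht htE
    have hZne : Y + t • H ≠ 0 := htE
    have hrpos : 0 < Real.sqrt (nf t) := by rw [hrZ]; exact normF_pos hZne
    set r : ℝ := Real.sqrt (nf t) with hr
    have hδrpos : 0 < δ + r := by positivity
    -- |Z t| ≤ |X| + |Y|
    have hrle : r ≤ normF X + normF Y := by
      have hZid : Y + t • H = (1-t) • Y + t • X := by
        funext i j
        rw [hZapp]
        simp only [Matrix.add_apply, Matrix.smul_apply, smul_eq_mul, hH, Matrix.sub_apply]
        ring
      rw [hr, hrZ, hZid]
      calc normF ((1-t) • Y + t • X) ≤ normF ((1-t) • Y) + normF (t • X) := normF_add_le _ _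
        _ = (1-t) * normF Y + t * normF X := by
            rw [normF_smul, normF_smul, abs_of_nonneg (by linarith [ht.2] : (0:ℝ) ≤ 1 - t),
              abs_of_nonneg ht.1.le]
        _ ≤ normF X + normF Y := by
            nlinarith [normF_nonneg X, normF_nonneg Y, ht.1.le, ht.2.le]
    have hδrD0 : δ + r ≤ D0 := by rw [hD0]; linarith
    -- n' = 2 * wf t
    have hn' : (∑ i, ∑ j, 2 * (Y i j + t * H i j) * H i j) = 2 * wf t := by
      rw [hwf, Finset.mul_sum]
      exact Finset.sum_congr rfl fun i _ => by
        rw [Finset.mul_sum]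
        exact Finset.sum_congr rfl fun j _ => by ring
    -- |wf t| ≤ r * |H|
    have hwb : |wf t| ≤ r * normF H := by
      rw [hwZ, hr, hrZ]
      exact abs_mdot_le _ _
    have hw2 : (wf t)^2 ≤ r^2 * (normF H)^2 := by
      have h1 : (wf t)^2 = |wf t|^2 := (sq_abs _).symm
      nlinarith [abs_nonneg (wf t), mul_nonneg hrpos.le (normF_nonneg H)]
    -- rewrite φ t
    have hφt : φ t = α * (δ + r)^(α-1) * ((wf t)^2 / r) + (δ + r)^α * (normF H)^2 := by
      rw [hφ]
      simp only
      rw [hn', hHH, ← hr]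
      have : 2 * wf t / (2 * r) = wf t / r := by
        rw [mul_div_mul_left _ _ (two_ne_zero)]
      rw [this]
      ring
    rw [hφt]
    have hc : α * (δ + r)^(α-1) ≤ 0 := by
      apply mul_nonpos_of_nonpos_of_nonneg hα0
      positivity
    have hstep1 : α * (δ + r)^(α-1) * (r * (normF H)^2) ≤ α * (δ + r)^(α-1) * ((wf t)^2 / r) := by
      apply mul_le_mul_of_nonpos_left ?_ hc
      rw [div_le_iff₀ hrpos]
      nlinarith
    have hstep2 : α * (δ + r)^α * (normF H)^2 ≤ α * (δ + r)^(α-1) * (r * (normF H)^2) := by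
      have h1 : (δ + r)^(α-1) * (δ + r) = (δ + r)^α := by
        rw [← Real.rpow_add_one hδrpos.ne' (α-1), show α - 1 + 1 = α by ring]
      have h2 : (δ + r)^(α-1) * r ≤ (δ + r)^(α-1) * (δ + r) := by
        apply mul_le_mul_of_nonneg_left (by linarith) (by positivity)
      calc α * (δ + r)^α * (normF H)^2 = α * ((δ + r)^(α-1) * (δ + r)) * (normF H)^2 := by
            rw [h1]
        _ ≤ α * ((δ + r)^(α-1) * r) * (normF H)^2 :=
            mul_le_mul_of_nonneg_right (mul_le_mul_of_nonpos_left h2 hα0) (sq_nonneg _)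
        _ = α * (δ + r)^(α-1) * (r * (normF H)^2) := by ring
    have hα_r : (1 + α) * (δ + r)^α * (normF H)^2 ≤
        α * (δ + r)^(α-1) * ((wf t)^2 / r) + (δ + r)^α * (normF H)^2 := by
      have hh := hstep2.trans hstep1
      have e : (1+α)*(δ + r)^α*(normF H)^2
          = α*(δ + r)^α*(normF H)^2 + (δ + r)^α*(normF H)^2 := by ring
      rw [e]
      linarith
    refine le_trans ?_ hα_r
    -- m ≤ (1+α)(δ+r)^α |H|²
    rw [hm]
    have hD0r : D0^α ≤ (δ + r)^α :=
      Real.rpow_le_rpow_of_nonpos hδrpos hδrD0 hα0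
    have h1α : (1:ℝ) + α = p/2 := by rw [hα]; ring
    rw [← h1α]
    exact mul_le_mul_of_nonneg_right
      (mul_le_mul_of_nonneg_left hD0r (le_of_lt hα1)) (sq_nonneg _)
  -- continuity of g
  have hgc : ∀ t : ℝ, ContinuousAt g t := by
    intro t
    have hnc : Continuous nf := by
      rw [hnf]
      apply continuous_finset_sum
      intro i _
      apply continuous_finset_sum
      intro j _
      exact ((continuous_const.add (continuous_id.mul continuous_const)).pow 2)
    have hwc : Continuous wf := by
      rw [hwf]
      apply continuous_finset_sum
      intro i _
      apply continuous_finset_sum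
      intro j _
      exact ((continuous_const.add (continuous_id.mul continuous_const)).mul continuous_const)
    have hrc : Continuous fun t => δ + Real.sqrt (nf t) :=
      continuous_const.add (Real.continuous_sqrt.comp hnc)
    by_cases hpos : 0 < δ + Real.sqrt (nf t)
    · have h1 : ContinuousAt (fun t => (δ + Real.sqrt (nf t))^α) t :=
        (hrc.continuousAt).rpow_const (Or.inl hpos.ne')
      rw [hg]
      exact h1.mul hwc.continuousAt
    · -- degenerate point : δ = 0 and Z t = 0
      push_neg at hpos
      have hrnn : 0 ≤ Real.sqrt (nf t) := Real.sqrt_nonneg _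
      have hδ0 : δ = 0 := le_antisymm (by linarith) hδ
      have hr0 : Real.sqrt (nf t) = 0 := le_antisymm (by linarith) hrnn
      have hZ0' : Y + t • H = 0 := by
        have := hrZ t
        rw [hr0] at this
        exact normF_eq_zero this.symm
      have hw0 : wf t = 0 := by
        rw [hwZ, hZ0']
        simp [mdot, Matrix.zero_apply]
      have hg0 : g t = 0 := by rw [hg]; simp [hw0]
      have hbound : ∀ s : ℝ, ‖g s‖ ≤ (Real.sqrt (nf s)) ^ (1+α) * normF H := by
        intro s
        rw [hg]
        simp only [hδ0, zero_add, Real.norm_eq_abs]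
        rcases eq_or_lt_of_le (Real.sqrt_nonneg (nf s)) with h0 | hpos'
        · have hZs : Y + s • H = 0 := normF_eq_zero (by rw [← hrZ s, ← h0])
          have hws : wf s = 0 := by rw [hwZ, hZs]; simp [mdot]
          rw [hws, mul_zero, abs_zero, ← h0, Real.zero_rpow (ne_of_gt hα1), zero_mul]
        · have hwbs : |wf s| ≤ Real.sqrt (nf s) * normF H := by
            rw [hwZ, hrZ]; exact abs_mdot_le _ _
          calc |Real.sqrt (nf s) ^ α * wf s| = Real.sqrt (nf s) ^ α * |wf s| := by
                rw [abs_mul, abs_of_nonneg (Real.rpow_nonneg (Real.sqrt_nonneg _) α)]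
            _ ≤ Real.sqrt (nf s) ^ α * (Real.sqrt (nf s) * normF H) :=
                mul_le_mul_of_nonneg_left hwbs (Real.rpow_nonneg (Real.sqrt_nonneg _) α)
            _ = Real.sqrt (nf s) ^ (1+α) * normF H := by
                rw [show (1:ℝ) + α = α + 1 by ring, Real.rpow_add_one hpos'.ne']
                ring
      have hblim : Filter.Tendsto (fun s => (Real.sqrt (nf s)) ^ (1+α) * normF H)
          (nhds t) (nhds 0) := by
        have hsq : ContinuousAt (fun s : ℝ => Real.sqrt (nf s)) t :=
          (Real.continuous_sqrt.comp hnc).continuousAt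
        have h2a : ContinuousAt (fun s => (Real.sqrt (nf s)) ^ (1+α)) t :=
          hsq.rpow_const (Or.inr (by linarith))
        have h2 : Filter.Tendsto (fun s => (Real.sqrt (nf s)) ^ (1+α)) (nhds t)
            (nhds ((Real.sqrt (nf t)) ^ (1+α))) := h2a.tendsto
        have h3 : (Real.sqrt (nf t)) ^ (1+α) = 0 := by
          rw [hr0, Real.zero_rpow (ne_of_gt hα1)]
        rw [h3] at h2
        simpa using h2.mul_const (normF H)
      have hsq := squeeze_zero_norm hbound hblim
      have : ContinuousAt g t := by
        rw [ContinuousAt, hg0]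
        exact hsq
      exact this
  have hgcOn : ContinuousOn g (Set.Icc 0 1) := fun t _ => (hgc t).continuousWithinAt
  have hmain := mvt_lower_excep hEsub hgcOn (fun t _ ht => hgd t ht) hφlow
  have hg10 : g 1 - g 0 = mdot (FmapS p δ X - FmapS p δ Y) H := by
    rw [hgF 1, hgF 0, hZ1, hZ0, mdot_sub_left]
  rw [hg10] at hmain
  have hcs := mdot_le (FmapS p δ X - FmapS p δ Y) H
  have hfinal : (p/2) * D0^α * (normF H)^2
      ≤ normF (FmapS p δ X - FmapS p δ Y) * normF H := by
    rw [hm] at hmain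
    linarith
  have h2 : ((p/2) * D0^α * normF H) * normF H
      ≤ normF (FmapS p δ X - FmapS p δ Y) * normF H := by
    calc ((p/2) * D0^α * normF H) * normF H = (p/2) * D0^α * (normF H)^2 := by ring
      _ ≤ _ := hfinal
  exact le_of_mul_le_mul_right h2 hHpos

end Stmt7Aux
namespace Stmt7Aux

section Main
variable {p δ : ℝ} {S : Mat → Mat} {DS : Mat → Fin 3 → Fin 3 → Fin 3 → Fin 3 → ℝ} {C₁ : ℝ}

set_option maxHeartbeats 1000000 in
lemma point (hp : 1 < p) (hp2 : p ≤ 2) (hδ : 0 ≤ δ)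
    (hcont : ∀ i j, Continuous fun P => S P i j)
    (hzero : S 0 = 0)
    (hderiv : ∀ P, symPart P ≠ 0 → ∀ i j k l,
      HasDerivAt (fun t : ℝ => S (P + t • Matrix.single k l 1) i j)
        (DS P i j k l) 0)
    (hC₁ : 0 < C₁)
    (hgrowth : ∀ P : Mat, symPart P ≠ 0 → ∀ i j k l,
      |DS P i j k l| ≤ C₁ * (δ + normF (symPart P)) ^ (p - 2))
    {ε : ℝ} (hε : 0 < ε) :
    ∃ c : ℝ, 0 < c ∧ ∀ A B C : Mat, IsSym A → IsSym B → IsSym C →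
      mdot (S A - S B) (C - B) ≤ ε * (normF (FmapS p δ A - FmapS p δ B))^2
        + c * (normF (FmapS p δ C - FmapS p δ B))^2 := by
  have hp0 : (0:ℝ) < p := by linarith
  have hQ1 : (1/2:ℝ)^(p-1) < 1 := Real.rpow_lt_one (by norm_num) (by norm_num) (by linarith)
  have hQ0 : (0:ℝ) < (1/2:ℝ)^(p-1) := Real.rpow_pos_of_pos (by norm_num) _
  set K₁ : ℝ := 432*C₁ + 8*(27*C₁/(1-(1/2:ℝ)^(p-1))) with hK1
  have hK1pos : 0 < K₁ := by
    have : 0 < 27*C₁/(1-(1/2:ℝ)^(p-1)) := div_pos (by linarith) (by linarith)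
    rw [hK1]; linarith
  set c : ℝ := 9*K₁^2*(2/p)^4/(4*ε) + 3*K₁*(2/p)^2 + 1 with hc
  have hcpos : 0 < c := by
    have h1 : 0 < 9*K₁^2*(2/p)^4/(4*ε) := by positivity
    have h2 : 0 < 3*K₁*(2/p)^2 := by positivity
    rw [hc]; linarith
  refine ⟨c, hcpos, ?_⟩
  intro A B C hA hB hC
  set FA2 : ℝ := (normF (FmapS p δ A - FmapS p δ B))^2 with hFA2def
  set FC2 : ℝ := (normF (FmapS p δ C - FmapS p δ B))^2 with hFC2def
  have hFA2nn : 0 ≤ FA2 := sq_nonneg _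
  have hFC2nn : 0 ≤ FC2 := sq_nonneg _
  have hRHSnn : 0 ≤ ε * FA2 + c * FC2 := by positivity
  rcases eq_or_ne A B with rfl | hAB
  · rw [sub_self]
    have : mdot 0 (C - A) = 0 := by simp [mdot, Matrix.zero_apply]
    rw [this]
    exact hRHSnn
  rcases eq_or_ne C B with rfl | hCB
  · rw [sub_self]
    have : mdot (S A - S C) 0 = 0 := by simp [mdot, Matrix.zero_apply]
    rw [this]
    exact hRHSnn
  set a : ℝ := normF (A - B) with hadef
  set c' : ℝ := normF (C - B) with hc'def
  have hapos : 0 < a := normF_pos (sub_ne_zero.2 hAB)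
  have hc'pos : 0 < c' := normF_pos (sub_ne_zero.2 hCB)
  set D : ℝ := δ + normF A + normF B with hDdef
  set E : ℝ := δ + normF C + normF B with hEdef
  have hsumAB : 0 < normF A + normF B := by
    by_contra h
    push_neg at h
    have h1 : normF A = 0 := le_antisymm (by linarith [normF_nonneg B]) (normF_nonneg A)
    have h2 : normF B = 0 := le_antisymm (by linarith [normF_nonneg A]) (normF_nonneg B)
    exact hAB (by rw [normF_eq_zero h1, normF_eq_zero h2])
  have hDpos : 0 < D := by rw [hDdef]; linarith
  have hEpos : 0 < E := by
    have h1 : 0 < normF C + normF B := by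
      by_contra h
      push_neg at h
      have h1 : normF C = 0 := le_antisymm (by linarith [normF_nonneg B]) (normF_nonneg C)
      have h2 : normF B = 0 := le_antisymm (by linarith [normF_nonneg C]) (normF_nonneg B)
      exact hCB (by rw [normF_eq_zero h1, normF_eq_zero h2])
    rw [hEdef]; linarith
  have hDp : 0 ≤ D^(p-2) := Real.rpow_nonneg hDpos.le _
  have hEp : 0 ≤ E^(p-2) := Real.rpow_nonneg hEpos.le _
  -- H1 bound
  have hS := H1 hp hp2 hδ hcont hzero hderiv hC₁ hgrowth A B hA hB
  -- flow bounds
  have hFA := flow hp hp2 hδ A B hA hB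
  have hFC := flow hp hp2 hδ C B hC hB
  have hsqr : ∀ {x : ℝ}, 0 < x → (x ^ ((p-2)/2))^2 = x^(p-2) := by
    intro x hx
    rw [sq, ← Real.rpow_add hx]
    congr 1
    ring
  have hFA2 : (p/2)^2 * (D^(p-2) * a^2) ≤ FA2 := by
    have h0 : 0 ≤ (p/2) * D^((p-2)/2) * a := by positivity
    have h := pow_le_pow_left₀ h0 hFA 2
    calc (p/2)^2 * (D^(p-2) * a^2) = ((p/2) * D^((p-2)/2) * a)^2 := by
          rw [mul_pow, mul_pow, hsqr hDpos]; ring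
      _ ≤ FA2 := h
  have hFC2 : (p/2)^2 * (E^(p-2) * c'^2) ≤ FC2 := by
    have h0 : 0 ≤ (p/2) * E^((p-2)/2) * c' := by positivity
    have h := pow_le_pow_left₀ h0 hFC 2
    calc (p/2)^2 * (E^(p-2) * c'^2) = ((p/2) * E^((p-2)/2) * c')^2 := by
          rw [mul_pow, mul_pow, hsqr hEpos]; ring
      _ ≤ FC2 := h
  -- main bound on mdot
  have hmd : mdot (S A - S B) (C - B) ≤ K₁ * (D^(p-2) * (a * c')) := by
    calc mdot (S A - S B) (C - B) ≤ normF (S A - S B) * normF (C - B) := mdot_le _ _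
      _ ≤ (K₁ * (D^(p-2) * a)) * c' := mul_le_mul_of_nonneg_right hS (normF_nonneg _)
      _ = K₁ * (D^(p-2) * (a * c')) := by ring
  -- |C| ≤ |B| + c'
  have hCle : normF C ≤ normF B + c' := by
    have h0 : C = B + (C - B) := by abel
    calc normF C = normF (B + (C - B)) := by rw [← h0]
      _ ≤ normF B + normF (C - B) := normF_add_le _ _
      _ = normF B + c' := by rw [hc'def]
  have hE2D : E ≤ 2 * D + c' := by
    rw [hEdef, hDdef]
    have := normF_nonneg A
    linarith
  by_cases hcase : c' ≤ D
  · -- near case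
    have hE3D : E ≤ 3 * D := by linarith
    have hDE : D^(p-2) ≤ 9 * E^(p-2) := by
      have h1 : E/3 ≤ D := by linarith
      have h2 : D^(p-2) ≤ (E/3)^(p-2) :=
        Real.rpow_le_rpow_of_nonpos (by positivity) h1 (by linarith)
      have h3 : (E/3)^(p-2) = E^(p-2) * (3:ℝ)^(2-p) := by
        rw [show E/3 = E * (3:ℝ)⁻¹ by ring, Real.mul_rpow hEpos.le (by norm_num),
          Real.inv_rpow (by norm_num), ← Real.rpow_neg (by norm_num),
          show -(p-2) = 2-p by ring]
      have h4 : (3:ℝ)^(2-p) ≤ 9 := by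
        calc (3:ℝ)^(2-p) ≤ (3:ℝ)^(1:ℝ) :=
              Real.rpow_le_rpow_of_exponent_le (by norm_num) (by linarith)
          _ = 3 := Real.rpow_one 3
          _ ≤ 9 := by norm_num
      calc D^(p-2) ≤ E^(p-2) * (3:ℝ)^(2-p) := h2.trans_eq h3
        _ ≤ E^(p-2) * 9 := mul_le_mul_of_nonneg_left h4 hEp
        _ = 9 * E^(p-2) := by ring
    set θ : ℝ := ε * (p/2)^2 with hθdef
    have hθpos : 0 < θ := by positivity
    set cY : ℝ := K₁^2/(4*θ) with hcYdef
    have hcYpos : 0 < cY := by positivity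
    have hcY4 : cY * (4*θ) = K₁^2 := by
      rw [hcYdef]; field_simp
    have hyoung : K₁ * (a * c') ≤ θ * a^2 + cY * c'^2 := by
      have hsub : (4*θ)*(cY*c'^2) = K₁^2*c'^2 := by
        calc (4*θ)*(cY*c'^2) = (cY*(4*θ))*c'^2 := by ring
          _ = K₁^2*c'^2 := by rw [hcY4]
      have hmul : (4*θ) * (K₁ * (a*c')) ≤ (4*θ) * (θ*a^2 + cY*c'^2) := by
        have hexp : (4*θ) * (θ*a^2 + cY*c'^2) - (4*θ) * (K₁*(a*c'))
            = (2*θ*a - K₁*c')^2 + ((4*θ)*(cY*c'^2) - K₁^2*c'^2) := by ring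
        have h5 := sq_nonneg (2*θ*a - K₁*c')
        linarith [hexp, hsub, h5]
      exact le_of_mul_le_mul_left hmul (by positivity)
    have hmd2 : mdot (S A - S B) (C - B) ≤ θ * (D^(p-2) * a^2) + cY * (D^(p-2) * c'^2) := by
      calc mdot (S A - S B) (C - B) ≤ K₁ * (D^(p-2) * (a * c')) := hmd
        _ = D^(p-2) * (K₁ * (a * c')) := by ring
        _ ≤ D^(p-2) * (θ * a^2 + cY * c'^2) := mul_le_mul_of_nonneg_left hyoung hDp
        _ = θ * (D^(p-2) * a^2) + cY * (D^(p-2) * c'^2) := by ring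
    have hterm1 : θ * (D^(p-2) * a^2) ≤ ε * FA2 := by
      calc θ * (D^(p-2) * a^2) = ε * ((p/2)^2 * (D^(p-2) * a^2)) := by rw [hθdef]; ring
        _ ≤ ε * FA2 := mul_le_mul_of_nonneg_left hFA2 hε.le
    have hterm2 : cY * (D^(p-2) * c'^2) ≤ c * FC2 := by
      have h1 : D^(p-2) * c'^2 ≤ 9 * (E^(p-2) * c'^2) := by
        calc D^(p-2) * c'^2 ≤ (9 * E^(p-2)) * c'^2 :=
              mul_le_mul_of_nonneg_right hDE (sq_nonneg _)
          _ = 9 * (E^(p-2) * c'^2) := by ring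
      have h2 : E^(p-2) * c'^2 ≤ (2/p)^2 * FC2 := by
        have e : E^(p-2) * c'^2 = (2/p)^2 * ((p/2)^2 * (E^(p-2) * c'^2)) := by
          field_simp
        rw [e]
        exact mul_le_mul_of_nonneg_left hFC2 (by positivity)
      have h3 : cY * (D^(p-2) * c'^2) ≤ cY * (9 * ((2/p)^2 * FC2)) := by
        apply mul_le_mul_of_nonneg_left ?_ hcYpos.le
        calc D^(p-2) * c'^2 ≤ 9 * (E^(p-2) * c'^2) := h1
          _ ≤ 9 * ((2/p)^2 * FC2) := by linarith
      refine h3.trans ?_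
      have e2 : cY * (9 * ((2/p)^2 * FC2)) = (9*K₁^2*(2/p)^4/(4*ε)) * FC2 := by
        rw [hcYdef, hθdef]
        field_simp
      rw [e2]
      apply mul_le_mul_of_nonneg_right ?_ hFC2nn
      rw [hc]
      have : 0 < 3*K₁*(2/p)^2 := by positivity
      linarith
    calc mdot (S A - S B) (C - B) ≤ θ * (D^(p-2) * a^2) + cY * (D^(p-2) * c'^2) := hmd2
      _ ≤ ε * FA2 + c * FC2 := add_le_add hterm1 hterm2
  · -- far case
    push_neg at hcase
    have haD : a ≤ D := by
      rw [hadef, hDdef]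
      have := normF_sub_le A B
      linarith
    have hDp1 : D^(p-2) * D = D^(p-1) := by
      rw [← Real.rpow_add_one hDpos.ne' (p-2), show p-2+1 = p-1 by ring]
    have hLcp : mdot (S A - S B) (C - B) ≤ K₁ * c'^p := by
      calc mdot (S A - S B) (C - B) ≤ K₁ * (D^(p-2) * (a * c')) := hmd
        _ ≤ K₁ * (D^(p-2) * (D * c')) := by
            apply mul_le_mul_of_nonneg_left ?_ hK1pos.le
            apply mul_le_mul_of_nonneg_left ?_ hDp
            exact mul_le_mul_of_nonneg_right haD hc'pos.le
        _ = K₁ * (D^(p-1) * c') := by rw [← hDp1]; ring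
        _ ≤ K₁ * (c'^(p-1) * c') := by
            apply mul_le_mul_of_nonneg_left ?_ hK1pos.le
            apply mul_le_mul_of_nonneg_right ?_ hc'pos.le
            exact Real.rpow_le_rpow hDpos.le hcase.le (by linarith)
        _ = K₁ * c'^p := by
            rw [← Real.rpow_add_one hc'pos.ne' (p-1), show p-1+1 = p by ring]
    have hE3c : E ≤ 3 * c' := by linarith
    have hcp_le : c'^p ≤ 3 * (2/p)^2 * FC2 := by
      have h1 : (3*c')^(p-2) ≤ E^(p-2) :=
        Real.rpow_le_rpow_of_nonpos hEpos hE3c (by linarith)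
      have h2 : (3*c')^(p-2) = 3^(p-2) * c'^(p-2) :=
        Real.mul_rpow (by norm_num) hc'pos.le
      have h3 : (1/3:ℝ) ≤ (3:ℝ)^(p-2) := by
        calc (1/3:ℝ) = (3:ℝ)^(-1:ℝ) := by
              rw [Real.rpow_neg_one]; norm_num
          _ ≤ (3:ℝ)^(p-2) :=
              Real.rpow_le_rpow_of_exponent_le (by norm_num) (by linarith)
      have hc2 : c'^(p-2) * c'^2 = c'^p := by
        rw [← Real.rpow_natCast c' 2, ← Real.rpow_add hc'pos]
        norm_num
      have h4 : (p/2)^2 * ((1/3) * c'^p) ≤ FC2 := by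
        calc (p/2)^2 * ((1/3) * c'^p) = (p/2)^2 * ((1/3) * (c'^(p-2) * c'^2)) := by rw [hc2]
          _ ≤ (p/2)^2 * ((3:ℝ)^(p-2) * (c'^(p-2) * c'^2)) := by
              apply mul_le_mul_of_nonneg_left ?_ (by positivity)
              apply mul_le_mul_of_nonneg_right h3
              positivity
          _ = (p/2)^2 * ((3^(p-2) * c'^(p-2)) * c'^2) := by ring
          _ = (p/2)^2 * ((3*c')^(p-2) * c'^2) := by rw [h2]
          _ ≤ (p/2)^2 * (E^(p-2) * c'^2) := by
              apply mul_le_mul_of_nonneg_left ?_ (by positivity)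
              exact mul_le_mul_of_nonneg_right h1 (sq_nonneg _)
          _ ≤ FC2 := hFC2
      have e : c'^p = 3 * (2/p)^2 * ((p/2)^2 * ((1/3) * c'^p)) := by
        field_simp
      rw [e]
      apply mul_le_mul_of_nonneg_left h4 (by positivity)
    calc mdot (S A - S B) (C - B) ≤ K₁ * c'^p := hLcp
      _ ≤ K₁ * (3 * (2/p)^2 * FC2) := by
          apply mul_le_mul_of_nonneg_left hcp_le hK1pos.le
      _ = (3*K₁*(2/p)^2) * FC2 := by ring
      _ ≤ ε * FA2 + c * FC2 := by
          have h1 : (3*K₁*(2/p)^2) * FC2 ≤ c * FC2 := by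
            apply mul_le_mul_of_nonneg_right ?_ hFC2nn
            rw [hc]
            have : 0 < 9*K₁^2*(2/p)^4/(4*ε) := by positivity
            linarith
          have h2 : 0 ≤ ε * FA2 := by positivity
          linarith

end Main
end Stmt7Aux

/-- Under the (p,δ)-structure assumption on `S`, for every `ε > 0` there is `c_ε > 0`
    depending only on `ε` and the characteristics of `S` such that
    `∫_Ω (S(Du)−S(Dv))·(Dw−Dv) ≤ ε‖F(Du)−F(Dv)‖₂² + c_ε‖F(Dw)−F(Dv)‖₂²`. -/
theorem stmt_7 (p δ : ℝ) (hp : 1 < p) (hp2 : p ≤ 2) (hδ : 0 ≤ δ)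
    (Ω : Set (Fin 3 → ℝ)) (hΩmeas : MeasurableSet Ω) (hΩbdd : Bornology.IsBounded Ω)
    (S : Matrix (Fin 3) (Fin 3) ℝ → Matrix (Fin 3) (Fin 3) ℝ)
    (DS : Matrix (Fin 3) (Fin 3) ℝ → Fin 3 → Fin 3 → Fin 3 → Fin 3 → ℝ)
    (hcont : ∀ i j, Continuous fun P => S P i j)
    (hsym : ∀ P, S P = S (symPart P))
    (hzero : S 0 = 0)
    (hderiv : ∀ P, symPart P ≠ 0 → ∀ i j k l,
      HasDerivAt (fun t : ℝ => S (P + t • Matrix.single k l 1) i j)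
        (DS P i j k l) 0)
    (C₀ C₁ : ℝ) (hC₀ : 0 < C₀) (hC₁ : 0 < C₁)
    (hcoerc : ∀ P Q : Matrix (Fin 3) (Fin 3) ℝ, symPart P ≠ 0 →
      C₀ * ((δ + normF (symPart P)) ^ (p - 2) * (normF (symPart Q)) ^ 2) ≤
        ∑ i, ∑ j, ∑ k, ∑ l, DS P i j k l * Q i j * Q k l)
    (hgrowth : ∀ P : Matrix (Fin 3) (Fin 3) ℝ, symPart P ≠ 0 → ∀ i j k l,
      |DS P i j k l| ≤ C₁ * (δ + normF (symPart P)) ^ (p - 2)) :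
    ∀ ε : ℝ, 0 < ε → ∃ c : ℝ, 0 < c ∧
      ∀ u v w : (Fin 3 → ℝ) → (Fin 3 → ℝ),
        (∀ x ∈ Ω, DifferentiableAt ℝ u x) →
        (∀ x ∈ Ω, DifferentiableAt ℝ v x) →
        (∀ x ∈ Ω, DifferentiableAt ℝ w x) →
        IntegrableOn
          (fun x => mdot (S (symGrad u x) - S (symGrad v x)) (symGrad w x - symGrad v x))
          Ω volume →
        IntegrableOn (fun x => (normF (FmapS p δ (symGrad u x) - FmapS p δ (symGrad v x))) ^ 2)
          Ω volume →
        IntegrableOn (fun x => (normF (FmapS p δ (symGrad w x) - FmapS p δ (symGrad v x))) ^ 2)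
          Ω volume →
        ∫ x in Ω, mdot (S (symGrad u x) - S (symGrad v x)) (symGrad w x - symGrad v x) ≤
          ε * (∫ x in Ω, (normF (FmapS p δ (symGrad u x) - FmapS p δ (symGrad v x))) ^ 2) +
          c * (∫ x in Ω, (normF (FmapS p δ (symGrad w x) - FmapS p δ (symGrad v x))) ^ 2) := by
  intro ε hε
  obtain ⟨c, hcpos, hpt⟩ := Stmt7Aux.point hp hp2 hδ hcont hzero hderiv hC₁ hgrowth hε
  refine ⟨c, hcpos, ?_⟩
  intro u v w hu hv hw hI hIu hIw
  have hsymg : ∀ (f : (Fin 3 → ℝ) → (Fin 3 → ℝ)) (x : Fin 3 → ℝ),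
      Stmt7Aux.IsSym (symGrad f x) := by
    intro f x i j
    simp only [symGrad]
    ring
  have hptx : ∀ x ∈ Ω,
      mdot (S (symGrad u x) - S (symGrad v x)) (symGrad w x - symGrad v x)
      ≤ ε * (normF (FmapS p δ (symGrad u x) - FmapS p δ (symGrad v x)))^2
        + c * (normF (FmapS p δ (symGrad w x) - FmapS p δ (symGrad v x)))^2 :=
    fun x _ => hpt _ _ _ (hsymg u x) (hsymg v x) (hsymg w x)
  have hR : IntegrableOn (fun x =>
      ε * (normF (FmapS p δ (symGrad u x) - FmapS p δ (symGrad v x)))^2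
      + c * (normF (FmapS p δ (symGrad w x) - FmapS p δ (symGrad v x)))^2) Ω volume :=
    (hIu.const_mul ε).add (hIw.const_mul c)
  calc ∫ x in Ω, mdot (S (symGrad u x) - S (symGrad v x)) (symGrad w x - symGrad v x)
      ≤ ∫ x in Ω, (ε * (normF (FmapS p δ (symGrad u x) - FmapS p δ (symGrad v x)))^2
          + c * (normF (FmapS p δ (symGrad w x) - FmapS p δ (symGrad v x)))^2) :=
        setIntegral_mono_on hI hR hΩmeas hptx
    _ = ε * (∫ x in Ω, (normF (FmapS p δ (symGrad u x) - FmapS p δ (symGrad v x)))^2)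
        + c * (∫ x in Ω, (normF (FmapS p δ (symGrad w x) - FmapS p δ (symGrad v x)))^2) := by
        rw [integral_add (hIu.const_mul ε) (hIw.const_mul c),
          integral_const_mul, integral_const_mul]
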